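/- Assume: (A2) the program (P_b) has a unique optimal solution x = x*(b); (B1) G_n = r_n(b_n − b) converges in distribution to a random vector G whose law is absolutely continuous with respect to Lebesgue measure on ℝ^m, where r_n → ∞; and (B2) ℙ(OPT(b_n) ≠ ∅) → 1. Define Pos(x) = {i ∈ {1,…,d} : x_i > 0} and TZ(x) = {1,…,d} \ ∪{I : I a basis with Aᵀλ(I) ≤ c and x(I,b) = x} (the coordinates not belonging to any dual feasible basis inducing x). Then for any measurable choice x*(b_n) of an element of OPT(b_n): ℙ(x*(b_n)_i = 0 for all i ∈ TZ(x)) → 1 and ℙ(x*(b_n)_i > 0 for all i ∈ Pos(x)) → 1 as n → ∞. -/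

import Mathlib

/-!
For `b'` near `b`, a dual feasible basis that is primal feasible for `b'` must induce `x*` at `b`
(a basis inducing another point is primal infeasible at `b` by uniqueness, hence also near `b`),
and it keeps the coordinates of `Pos(x*)` positive by continuity. An optimal solution of `(P_b')`
whose support columns are linearly independent is the basic solution of a dual feasible basis:
complementary slackness (Farkas) gives a dual solution tight on the support, and the support is
completed to a dual feasible basis by the ratio test. Any other optimal solution lies in the
interior of a segment between optimal solutions of smaller support, because uniqueness at `b`
rules out nonzero recession directions. Both required properties are convex, so they hold on all
of `OPT(b')`. Finally `b_n → b` in probability by Slutsky's lemma, as `b_n - b = r_n⁻¹ • G_n`.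
-/

open Matrix

noncomputable section

variable {m d : ℕ}

/-- The primal feasible set `P(b) = {x : A x = b, x ≥ 0}`. -/
def feasSet (A : Matrix (Fin m) (Fin d) ℝ) (b : Fin m → ℝ) : Set (Fin d → ℝ) :=
  {x | A *ᵥ x = b ∧ ∀ i, 0 ≤ x i}

/-- The optimality set `OPT(b)` of the primal program `(P_b)`. -/
def optSet (A : Matrix (Fin m) (Fin d) ℝ) (b : Fin m → ℝ) (c : Fin d → ℝ) :
    Set (Fin d → ℝ) :=
  {x | x ∈ feasSet A b ∧ ∀ y ∈ feasSet A b, c ⬝ᵥ x ≤ c ⬝ᵥ y}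

/-- The dual feasible set `{λ : Aᵀ λ ≤ c}`. -/
def dualFeasSet (A : Matrix (Fin m) (Fin d) ℝ) (c : Fin d → ℝ) : Set (Fin m → ℝ) :=
  {l | ∀ j, (Aᵀ *ᵥ l) j ≤ c j}

/-- The set of optimal solutions of the dual program `(D_b)`. -/
def dualOptSet (A : Matrix (Fin m) (Fin d) ℝ) (b : Fin m → ℝ) (c : Fin d → ℝ) :
    Set (Fin m → ℝ) :=
  {l | l ∈ dualFeasSet A c ∧ ∀ mu ∈ dualFeasSet A c, b ⬝ᵥ mu ≤ b ⬝ᵥ l}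

/-- The submatrix `A_I` of the columns indexed by `I`, where the subset
`I ⊆ {1,…,d}` of cardinality `m` is encoded by the strictly monotone
enumeration `e : Fin m → Fin d` of its elements. -/
def subMat (A : Matrix (Fin m) (Fin d) ℝ) (e : Fin m → Fin d) :
    Matrix (Fin m) (Fin m) ℝ :=
  A.submatrix id e

/-- `e` encodes a basis: a subset of size `m` of the columns (strictly monotone
enumeration) whose corresponding submatrix `A_I` is invertible. -/
def IsBasis (A : Matrix (Fin m) (Fin d) ℝ) (e : Fin m → Fin d) : Prop :=
  StrictMono e ∧ IsUnit (subMat A e).det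

/-- The primal basic solution `x(I, v)`: equal to `(A_I)⁻¹ v` on the coordinates
in `I` and `0` elsewhere. -/
def basicSol (A : Matrix (Fin m) (Fin d) ℝ) (e : Fin m → Fin d) (v : Fin m → ℝ) :
    Fin d → ℝ :=
  fun i => ∑ j, if e j = i then ((subMat A e)⁻¹ *ᵥ v) j else 0

/-- The dual basic solution `λ(I) = (A_I)⁻ᵀ c_I`. -/
def dualSol (A : Matrix (Fin m) (Fin d) ℝ) (c : Fin d → ℝ) (e : Fin m → Fin d) :
    Fin m → ℝ :=
  ((subMat A e)ᵀ)⁻¹ *ᵥ fun j => c (e j)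

/-- `I` is a dual feasible basis: `Aᵀ λ(I) ≤ c`. -/
def DualFeasibleBasis (A : Matrix (Fin m) (Fin d) ℝ) (c : Fin d → ℝ)
    (e : Fin m → Fin d) : Prop :=
  IsBasis A e ∧ ∀ j, (Aᵀ *ᵥ dualSol A c e) j ≤ c j

/-- `I` is a primal feasible basis for `(P_b)`: `x(I,b) ≥ 0`. -/
def PrimalFeasibleBasis (A : Matrix (Fin m) (Fin d) ℝ) (b : Fin m → ℝ)
    (e : Fin m → Fin d) : Prop :=
  IsBasis A e ∧ ∀ i, 0 ≤ basicSol A e b i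

open MeasureTheory Filter Topology

/-- Convergence in distribution (weak convergence of pushforward laws),
characterized via bounded continuous test functions. -/
def TendstoInDistribution {Ω E : Type*} [MeasurableSpace Ω] (P : Measure Ω)
    [TopologicalSpace E] (X : ℕ → Ω → E) (Y : Ω → E) : Prop :=
  ∀ f : BoundedContinuousFunction E ℝ,
    Tendsto (fun n => ∫ ω, f (X n ω) ∂P) atTop (𝓝 (∫ ω, f (Y ω) ∂P))


section BasicSolution

variable {A : Matrix (Fin m) (Fin d) ℝ} {e : Fin m → Fin d}

theorem IsBasis.injective (he : IsBasis A e) : Function.Injective e :=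
  he.1.injective

theorem basicSol_apply_of_notMem_range (A : Matrix (Fin m) (Fin d) ℝ) (v : Fin m → ℝ)
    {i : Fin d} (hi : i ∉ Set.range e) : basicSol A e v i = 0 :=
  Finset.sum_eq_zero fun j _ => if_neg fun h => hi ⟨j, h⟩

theorem basicSol_apply_self (A : Matrix (Fin m) (Fin d) ℝ) (he : Function.Injective e)
    (v : Fin m → ℝ) (j : Fin m) : basicSol A e v (e j) = ((subMat A e)⁻¹ *ᵥ v) j := by
  rw [basicSol, Finset.sum_eq_single j (fun j' _ hj' => if_neg (he.ne hj')) (by simp), if_pos rfl]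

theorem mulVec_eq_subMat_mulVec (he : Function.Injective e) {x : Fin d → ℝ}
    (hx : ∀ i ∉ Set.range e, x i = 0) : A *ᵥ x = subMat A e *ᵥ (x ∘ e) := by
  ext k
  exact (Fintype.sum_of_injective e he _ _ (fun i hi => by simp [hx i hi]) fun j => rfl).symm

theorem IsBasis.mulVec_basicSol (he : IsBasis A e) (v : Fin m → ℝ) :
    A *ᵥ basicSol A e v = v := by
  have hcomp : basicSol A e v ∘ e = (subMat A e)⁻¹ *ᵥ v :=
    funext (basicSol_apply_self A he.injective v)
  rw [mulVec_eq_subMat_mulVec he.injective fun i => basicSol_apply_of_notMem_range A v, hcomp,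
    mulVec_mulVec, mul_nonsing_inv _ he.2, one_mulVec]

theorem IsBasis.eq_basicSol (he : IsBasis A e) {x : Fin d → ℝ}
    (hx : ∀ i ∉ Set.range e, x i = 0) : x = basicSol A e (A *ᵥ x) := by
  have hcomp : x ∘ e = basicSol A e (A *ᵥ x) ∘ e := by
    ext j
    change x (e j) = basicSol A e (A *ᵥ x) (e j)
    rw [basicSol_apply_self A he.injective, mulVec_eq_subMat_mulVec he.injective hx,
      mulVec_mulVec, nonsing_inv_mul _ he.2, one_mulVec, Function.comp_apply]
  ext i
  by_cases hi : i ∈ Set.range e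
  · obtain ⟨j, rfl⟩ := hi
    exact congrFun hcomp j
  · rw [hx i hi, basicSol_apply_of_notMem_range A _ hi]

theorem IsBasis.dotProduct_basicSol (he : IsBasis A e) (c : Fin d → ℝ) (v : Fin m → ℝ) :
    c ⬝ᵥ basicSol A e v = v ⬝ᵥ dualSol A c e := by
  have hsum : c ⬝ᵥ basicSol A e v = (c ∘ e) ⬝ᵥ ((subMat A e)⁻¹ *ᵥ v) :=
    (Fintype.sum_of_injective e he.injective _ _
      (fun i hi => by simp [basicSol_apply_of_notMem_range A v hi])
      fun j => by simp [basicSol_apply_self A he.injective]).symm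
  rw [hsum, dotProduct_mulVec, dualSol, ← transpose_nonsing_inv, mulVec_transpose,
    dotProduct_comm]
  rfl

theorem continuous_basicSol (A : Matrix (Fin m) (Fin d) ℝ) (e : Fin m → Fin d) :
    Continuous (basicSol A e) := by
  refine continuous_pi fun i => continuous_finsetSum _ fun j _ => ?_
  split_ifs
  · fun_prop
  · exact continuous_const

theorem dualSol_eq_of_tight (he : IsBasis A e) {c : Fin d → ℝ} {l : Fin m → ℝ}
    (htight : ∀ j, (Aᵀ *ᵥ l) (e j) = c (e j)) : dualSol A c e = l := by
  have h : (subMat A e)ᵀ *ᵥ l = c ∘ e := funext htight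
  rw [dualSol, ← Function.comp_def, ← h, mulVec_mulVec,
    nonsing_inv_mul _ (by rw [det_transpose]; exact he.2), one_mulVec]

end BasicSolution

section NonnegPerturbation

variable {ι : Type*} [Fintype ι] {x g : ι → ℝ}

/-- The ratio test of the simplex method. -/
theorem exists_nonneg_add_smul_eq_zero (hx : 0 ≤ x) (hg : ∃ i, g i < 0) :
    ∃ τ : ℝ, 0 ≤ τ ∧ 0 ≤ x + τ • g ∧ ∃ i, g i < 0 ∧ x i + τ * g i = 0 := by
  classical
  obtain ⟨i₀, hi₀, hmin⟩ := Finset.exists_min_image (Finset.univ.filter fun i => g i < 0)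
    (fun i => x i / -g i) (by simpa [Finset.Nonempty] using hg)
  have hgi₀ : g i₀ < 0 := (Finset.mem_filter.1 hi₀).2
  have hτ : x i₀ / -g i₀ * -g i₀ = x i₀ := div_mul_cancel₀ _ (by linarith)
  refine ⟨x i₀ / -g i₀, div_nonneg (hx i₀) (by linarith), fun i => ?_, i₀, hgi₀, by linarith⟩
  show 0 ≤ x i + x i₀ / -g i₀ * g i
  by_cases hgi : g i < 0
  · have h := (le_div_iff₀ (neg_pos.2 hgi)).1 (hmin i (by simpa using hgi))
    linarith
  · exact add_nonneg (hx i) (mul_nonneg (div_nonneg (hx i₀) (by linarith)) (not_lt.1 hgi))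

theorem exists_pos_nonneg_add_smul_support_ssubset (hx : 0 ≤ x)
    (hg : ∀ i, x i = 0 → g i = 0) (hneg : ∃ i, g i < 0) :
    ∃ τ : ℝ, 0 < τ ∧ 0 ≤ x + τ • g ∧ Function.support (x + τ • g) ⊂ Function.support x := by
  obtain ⟨τ, hτ, hnn, i, hgi, hxi⟩ := exists_nonneg_add_smul_eq_zero hx hneg
  have hxi_pos : 0 < x i := (hx i).lt_of_ne fun h => hgi.ne (hg i h.symm)
  refine ⟨τ, hτ.lt_of_ne ?_, hnn, ?_, ?_⟩
  · rintro rfl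
    simp at hxi
    linarith
  · intro j hj h
    simp [h, hg j h] at hj
  · intro h
    exact h hxi_pos.ne' (by simpa using hxi)

theorem eventually_nonneg_add_smul (hx : 0 ≤ x) (hg : ∀ i, x i = 0 → 0 ≤ g i) :
    ∀ᶠ δ in 𝓝[>] (0 : ℝ), 0 ≤ x + δ • g := by
  refine Filter.eventually_all.2 fun i => ?_
  rcases (hx i).eq_or_lt with hxi | hxi
  · filter_upwards [self_mem_nhdsWithin] with δ hδ
    simp [← hxi, mul_nonneg (le_of_lt hδ) (hg i hxi.symm)]
  · have hcont : Continuous fun δ : ℝ => x i + δ * g i := by fun_prop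
    filter_upwards [nhdsWithin_le_nhds (hcont.continuousAt.eventually (lt_mem_nhds (by simpa)))]
      with δ hδ
    exact hδ.le

end NonnegPerturbation

section Cone

variable {E : Type*} [NormedAddCommGroup E] [NormedSpace ℝ E] {ι : Type*} [Fintype ι]

theorem exists_neg_relation_of_not_linearIndepOn {v : ι → E} {s : Set ι}
    (h : ¬LinearIndepOn ℝ v s) :
    ∃ g : ι → ℝ, (∀ i ∉ s, g i = 0) ∧ ∑ i, g i • v i = 0 ∧ ∃ i, g i < 0 := by
  classical
  rw [linearIndepOn_iff''] at h
  push Not at h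
  obtain ⟨t, g, hts, hgt, hsum, i, -, hgi⟩ := h
  have hsum' : ∑ i, g i • v i = 0 := by
    rw [← hsum]
    exact (Finset.sum_subset t.subset_univ fun j _ hj => by simp [hgt j hj]).symm
  have hgs : ∀ j ∉ s, g j = 0 := fun j hj => hgt j fun hjt => hj (hts hjt)
  rcases hgi.lt_or_gt with hneg | hpos
  · exact ⟨g, hgs, hsum', i, hneg⟩
  · exact ⟨-g, fun j hj => by simp [hgs j hj], by simp [neg_smul, hsum'], i, by simpa⟩

/-- Carathéodory's theorem for cones. -/
theorem exists_nonneg_linearIndepOn_support_sum_smul_eq (v : ι → E) {t : ι → ℝ} (ht : 0 ≤ t) :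
    ∃ u : ι → ℝ, 0 ≤ u ∧ LinearIndepOn ℝ v (Function.support u) ∧
      ∑ i, u i • v i = ∑ i, t i • v i := by
  induction hn : (Function.support t).ncard using Nat.strong_induction_on generalizing t with
  | _ n ih =>
  by_cases hind : LinearIndepOn ℝ v (Function.support t)
  · exact ⟨t, ht, hind, rfl⟩
  obtain ⟨g, hg, hgv, hneg⟩ := exists_neg_relation_of_not_linearIndepOn hind
  obtain ⟨τ, -, hnn, hss⟩ := exists_pos_nonneg_add_smul_support_ssubset ht
    (fun i hi => hg i (by simpa using hi)) hneg
  obtain ⟨u, hu, hind', hsum⟩ := ih _ (hn ▸ Set.ncard_lt_ncard hss) hnn rfl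
  refine ⟨u, hu, hind', ?_⟩
  simp [hsum, add_smul, Finset.sum_add_distrib, mul_smul, ← Finset.smul_sum, hgv]

theorem isClosed_image_linearCombination_Ici [FiniteDimensional ℝ E] (v : ι → E) :
    IsClosed (Fintype.linearCombination ℝ v '' Set.Ici 0) := by
  classical
  have hcover : Fintype.linearCombination ℝ v '' Set.Ici 0 =
      ⋃ s : {s : Finset ι // LinearIndepOn ℝ v (s : Set ι)},
        Fintype.linearCombination ℝ (fun i : (s : Finset ι) => v i) '' Set.Ici 0 := by
    ext x
    simp only [Set.mem_image, Set.mem_Ici, Set.mem_iUnion, Fintype.linearCombination_apply]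
    constructor
    · rintro ⟨t, ht, rfl⟩
      obtain ⟨u, hu, hind, hsum⟩ := exists_nonneg_linearIndepOn_support_sum_smul_eq v ht
      refine ⟨⟨Finset.univ.filter (u · ≠ 0), by convert hind; ext; simp⟩, fun i => u i,
        fun i => hu i,
        hsum ▸ Fintype.sum_of_injective _ Subtype.val_injective _ _ (fun i hi => ?_) fun _ => rfl⟩
      simp_all
    · rintro ⟨⟨s, _⟩, w, hw, rfl⟩
      refine ⟨fun i => if h : i ∈ s then w ⟨i, h⟩ else 0, fun i => ?_,
        (Fintype.sum_of_injective _ Subtype.val_injective _ _ (fun i hi => ?_)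
          fun i => by simp).symm⟩
      · simp only [Pi.zero_apply]
        split_ifs
        exacts [hw _, le_rfl]
      · simp_all
  rw [hcover]
  refine isClosed_iUnion_of_finite fun s => ?_
  have hinj := linearIndependent_iff_injective_fintypeLinearCombination.1 s.2
  exact (LinearMap.isClosedEmbedding_of_injective (LinearMap.ker_eq_bot.2 hinj)).isClosedMap _
    isClosed_Ici

theorem exists_strongDual_of_notMem_image_linearCombination [FiniteDimensional ℝ E] (v : ι → E)
    {x : E} (hx : x ∉ Fintype.linearCombination ℝ v '' Set.Ici 0) :
    ∃ f : StrongDual ℝ E, (∀ i, f (v i) ≤ 0) ∧ 0 < f x := by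
  classical
  obtain ⟨f, u, hf, hu⟩ := geometric_hahn_banach_closed_point
    ((convex_Ici 0).linear_image _) (isClosed_image_linearCombination_Ici v) hx
  have hu0 : 0 < u := by simpa using hf 0 ⟨0, Set.self_mem_Ici, map_zero _⟩
  refine ⟨f, fun i => ?_, hu0.trans hu⟩
  by_contra! hi
  have hmem : (u / f (v i)) • v i ∈ Fintype.linearCombination ℝ v '' Set.Ici 0 :=
    ⟨Pi.single i (u / f (v i)), Pi.single_nonneg.2 (div_nonneg hu0.le hi.le),
      Fintype.linearCombination_apply_single _ _ _ _⟩
  have := hf _ hmem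
  rw [map_smul, smul_eq_mul, div_mul_cancel₀ _ hi.ne'] at this
  exact lt_irrefl _ this

end Cone

/-- Farkas' lemma. -/
theorem exists_nonneg_vecMul_eq_or_exists_mulVec_nonpos {κ n : Type*} [Fintype κ] [Fintype n]
    (M : Matrix κ n ℝ) (c : n → ℝ) :
    (∃ t, 0 ≤ t ∧ t ᵥ* M = c) ∨ ∃ w, M *ᵥ w ≤ 0 ∧ 0 < c ⬝ᵥ w := by
  classical
  by_cases hc : c ∈ Fintype.linearCombination ℝ (fun k => M k) '' Set.Ici 0
  · obtain ⟨t, ht, rfl⟩ := hc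
    exact Or.inl ⟨t, ht, by rw [Fintype.linearCombination_apply, vecMul_eq_sum]⟩
  obtain ⟨f, hf, hfc⟩ := exists_strongDual_of_notMem_image_linearCombination _ hc
  have hfw : ∀ y, f y = y ⬝ᵥ fun i => f fun j => if i = j then 1 else 0 := fun y =>
    LinearMap.pi_apply_eq_sum_univ (f : (n → ℝ) →ₗ[ℝ] ℝ) y
  refine Or.inr ⟨fun i => f fun j => if i = j then 1 else 0, fun k => ?_, by rwa [← hfw]⟩
  change M k ⬝ᵥ _ ≤ 0
  rw [← hfw]
  exact hf k

section LinearProgram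

variable {A : Matrix (Fin m) (Fin d) ℝ} {c : Fin d → ℝ} {v : Fin m → ℝ} {x : Fin d → ℝ}

theorem dotProduct_le_of_mem_dualFeasSet {l : Fin m → ℝ} (hl : l ∈ dualFeasSet A c)
    (hx : x ∈ feasSet A v) : v ⬝ᵥ l ≤ c ⬝ᵥ x := by
  rw [← hx.1, dotProduct_comm, dotProduct_mulVec, ← mulVec_transpose]
  exact dotProduct_le_dotProduct_of_nonneg_right hl hx.2

theorem DualFeasibleBasis.basicSol_mem_optSet {e : Fin m → Fin d} (he : DualFeasibleBasis A c e)
    (hv : 0 ≤ basicSol A e v) : basicSol A e v ∈ optSet A v c :=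
  ⟨⟨he.1.mulVec_basicSol v, hv⟩, fun _ hy =>
    (he.1.dotProduct_basicSol c v).trans_le (dotProduct_le_of_mem_dualFeasSet he.2 hy)⟩

theorem eq_zero_of_optSet_eq_singleton {xstar : Fin d → ℝ} (h : optSet A v c = {xstar})
    {r : Fin d → ℝ} (hAr : A *ᵥ r = 0) (hr : 0 ≤ r) (hcr : c ⬝ᵥ r ≤ 0) : r = 0 := by
  have hx : xstar ∈ optSet A v c := h ▸ rfl
  have hopt : xstar + r ∈ optSet A v c :=
    ⟨⟨by rw [mulVec_add, hAr, add_zero, hx.1.1], fun i => add_nonneg (hx.1.2 i) (hr i)⟩,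
      fun y hy => by rw [dotProduct_add]; linarith [hx.2 y hy]⟩
  rw [h] at hopt
  simpa using hopt

theorem add_smul_mem_optSet (hx : x ∈ optSet A v c) {g : Fin d → ℝ} (hAg : A *ᵥ g = 0)
    (hcg : c ⬝ᵥ g = 0) {τ : ℝ} (hnn : 0 ≤ x + τ • g) : x + τ • g ∈ optSet A v c :=
  ⟨⟨by rw [mulVec_add, mulVec_smul, hAg, smul_zero, add_zero, hx.1.1], hnn⟩, fun y hy => by
    rw [dotProduct_add, dotProduct_smul, hcg, smul_zero, add_zero]
    exact hx.2 y hy⟩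

theorem dotProduct_nonneg_of_mem_optSet (hx : x ∈ optSet A v c) {g : Fin d → ℝ}
    (hAg : A *ᵥ g = 0) (hg : ∀ i, x i = 0 → 0 ≤ g i) : 0 ≤ c ⬝ᵥ g := by
  obtain ⟨δ, hnn, hδ⟩ := ((eventually_nonneg_add_smul hx.1.2 hg).and self_mem_nhdsWithin).exists
  have h := hx.2 _ ⟨by rw [mulVec_add, mulVec_smul, hAg, smul_zero, add_zero, hx.1.1], hnn⟩
  rw [dotProduct_add, dotProduct_smul, smul_eq_mul] at h
  exact nonneg_of_mul_nonneg_right (by linarith) hδ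

/-- Complementary slackness, from Farkas' lemma applied to the rows of `A`, `-A` and of the
identity at the coordinates where `x` vanishes. -/
theorem exists_mem_dualFeasSet_tight_of_mem_optSet (hx : x ∈ optSet A v c) :
    ∃ l ∈ dualFeasSet A c, ∀ i, x i ≠ 0 → (Aᵀ *ᵥ l) i = c i := by
  classical
  set z : Fin d → ℝ := fun i => if x i = 0 then 1 else 0
  rcases exists_nonneg_vecMul_eq_or_exists_mulVec_nonpos
    (fromRows A (fromRows (-A) (diagonal z))) c with ⟨t, ht, htc⟩ | ⟨w, hw, hcw⟩
  · set l := t ∘ Sum.inl - (t ∘ Sum.inr) ∘ Sum.inl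
    have hc : ∀ i, c i = (Aᵀ *ᵥ l) i + t (Sum.inr (Sum.inr i)) * z i := by
      intro i
      rw [← htc, mulVec_transpose, sub_vecMul, vecMul_fromRows, vecMul_fromRows, vecMul_neg]
      simp only [Pi.add_apply, Pi.sub_apply, Pi.neg_apply, vecMul_diagonal, Function.comp_apply]
      ring
    refine ⟨l, fun i => ?_, fun i hi => ?_⟩
    · rw [hc i]
      exact le_add_of_nonneg_right (mul_nonneg (ht _) (by positivity))
    · rw [hc i]
      simp [z, hi]
  · have hAw : A *ᵥ -w = 0 := by
      ext k
      have h₁ := hw (Sum.inl k)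
      have h₂ := hw (Sum.inr (Sum.inl k))
      simp only [fromRows_mulVec, Sum.elim_inl, Sum.elim_inr, neg_mulVec, Pi.neg_apply,
        Pi.zero_apply] at h₁ h₂
      simp only [mulVec_neg, Pi.neg_apply, Pi.zero_apply, neg_eq_zero]
      linarith
    have hzw : ∀ i, x i = 0 → 0 ≤ -w i := by
      intro i hi
      have h := hw (Sum.inr (Sum.inr i))
      simp only [fromRows_mulVec, Sum.elim_inr, mulVec_diagonal, Pi.zero_apply, z, hi,
        ↓reduceIte, one_mul] at h
      linarith
    have := dotProduct_nonneg_of_mem_optSet hx hAw hzw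
    rw [dotProduct_neg] at this
    linarith

end LinearProgram

section BasisCompletion

variable {A : Matrix (Fin m) (Fin d) ℝ} {c : Fin d → ℝ} {l : Fin m → ℝ} {F : Finset (Fin d)}

theorem card_le_of_linearIndepOn (hF : LinearIndepOn ℝ Aᵀ (F : Set (Fin d))) : F.card ≤ m := by
  simpa using hF.fintype_card_le_finrank

theorem transpose_mulVec_injective_of_rank_eq (hA : A.rank = m) :
    Function.Injective (Aᵀ *ᵥ ·) := by
  have hrows : LinearIndependent ℝ A.row := by
    rw [linearIndependent_iff_card_eq_finrank_span, Set.finrank, ← rank_eq_finrank_span_row, hA,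
      Fintype.card_fin]
  simpa [mulVec_transpose] using vecMul_injective_iff.2 hrows

theorem exists_mulVec_eq_zero_on_and_pos (hA : A.rank = m) (hF : F.card < m) :
    ∃ u : Fin m → ℝ, (∀ i ∈ F, (Aᵀ *ᵥ u) i = 0) ∧ ∃ i, 0 < (Aᵀ *ᵥ u) i := by
  have hker : LinearMap.ker (Aᵀ.submatrix ((↑) : F → Fin d) id).mulVecLin ≠ ⊥ :=
    LinearMap.ker_ne_bot_of_finrank_lt (by simpa using hF)
  obtain ⟨u, hu, hu0⟩ := Submodule.exists_mem_ne_zero_of_ne_bot hker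
  have hF0 : ∀ i ∈ F, (Aᵀ *ᵥ u) i = 0 := fun i hi => congrFun (LinearMap.mem_ker.1 hu) ⟨i, hi⟩
  obtain ⟨i, hi⟩ : ∃ i, (Aᵀ *ᵥ u) i ≠ 0 := by
    by_contra! h
    exact hu0 (transpose_mulVec_injective_of_rank_eq hA (by simpa using (funext h : Aᵀ *ᵥ u = 0)))
  rcases hi.lt_or_gt with hneg | hpos
  · exact ⟨-u, fun j hj => by simp [mulVec_neg, hF0 j hj], i, by simpa [mulVec_neg]⟩
  · exact ⟨u, hF0, i, hpos⟩

/-- Move `l` along a direction orthogonal to the columns in `F` until one more constraint becomes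
tight. -/
theorem exists_tight_insert (hA : A.rank = m) (hF : LinearIndepOn ℝ Aᵀ (F : Set (Fin d)))
    (hcard : F.card < m) (hl : l ∈ dualFeasSet A c) (htight : ∀ i ∈ F, (Aᵀ *ᵥ l) i = c i) :
    ∃ i ∉ F, ∃ l' ∈ dualFeasSet A c, (∀ j ∈ insert i F, (Aᵀ *ᵥ l') j = c j) ∧
      LinearIndepOn ℝ Aᵀ (insert i F : Finset (Fin d)) := by
  obtain ⟨u, huF, hpos⟩ := exists_mulVec_eq_zero_on_and_pos hA hcard
  obtain ⟨τ, -, hnn, i, hi, hτi⟩ := exists_nonneg_add_smul_eq_zero (x := c - Aᵀ *ᵥ l)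
    (g := -(Aᵀ *ᵥ u)) (fun j => sub_nonneg.2 (hl j)) (by simpa using hpos)
  have hl' : ∀ j, (Aᵀ *ᵥ (l + τ • u)) j = (Aᵀ *ᵥ l) j + τ * (Aᵀ *ᵥ u) j := fun j => by
    simp [mulVec_add, mulVec_smul]
  have hiF : i ∉ F := fun h => by simp [huF i h] at hi
  have hspan : ∀ y ∈ Submodule.span ℝ (Aᵀ '' F), y ⬝ᵥ u = 0 := by
    intro y hy
    induction hy using Submodule.span_induction with
    | mem y hy =>
      obtain ⟨j, hj, rfl⟩ := hy
      exact huF j hj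
    | zero => exact zero_dotProduct u
    | add y z _ _ hy hz => rw [add_dotProduct, hy, hz, add_zero]
    | smul a y _ hy => rw [smul_dotProduct, hy, smul_zero]
  refine ⟨i, hiF, l + τ • u, fun j => ?_, fun j hj => ?_, ?_⟩
  · have := hnn j
    simp only [Pi.zero_apply, Pi.add_apply, Pi.sub_apply, Pi.smul_apply, Pi.neg_apply,
      smul_eq_mul] at this
    rw [hl' j]
    linarith
  · rcases Finset.mem_insert.1 hj with rfl | hj
    · simp only [Pi.sub_apply, Pi.neg_apply] at hτi
      rw [hl' j]
      linarith
    · rw [hl' j, huF j hj, mul_zero, add_zero, htight j hj]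
  · rw [Finset.coe_insert]
    exact hF.insert fun h => (neg_neg_iff_pos.1 hi).ne' (hspan _ h)

theorem exists_dualFeasibleBasis_range_eq (hF : LinearIndepOn ℝ Aᵀ (F : Set (Fin d)))
    (hcard : F.card = m) (hl : l ∈ dualFeasSet A c) (htight : ∀ i ∈ F, (Aᵀ *ᵥ l) i = c i) :
    ∃ e, DualFeasibleBasis A c e ∧ Set.range e = F := by
  classical
  set e : Fin m → Fin d := fun j => F.orderEmbOfFin hcard j
  have hmem : ∀ j, e j ∈ F := F.orderEmbOfFin_mem hcard
  have hcols : LinearIndependent ℝ (subMat A e).col :=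
    hF.comp (fun j => ⟨e j, hmem j⟩) fun j k h => (F.orderEmbOfFin hcard).injective
      (congrArg Subtype.val h)
  have hbasis : IsBasis A e :=
    ⟨(F.orderEmbOfFin hcard).strictMono,
      (isUnit_iff_isUnit_det _).1 (linearIndependent_cols_iff_isUnit.1 hcols)⟩
  refine ⟨e, ⟨hbasis, ?_⟩, F.range_orderEmbOfFin hcard⟩
  rw [dualSol_eq_of_tight hbasis fun j => htight _ (hmem j)]
  exact hl

theorem exists_dualFeasibleBasis_superset (hA : A.rank = m) {F : Finset (Fin d)}
    {l : Fin m → ℝ} (hF : LinearIndepOn ℝ Aᵀ (F : Set (Fin d))) (hl : l ∈ dualFeasSet A c)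
    (htight : ∀ i ∈ F, (Aᵀ *ᵥ l) i = c i) :
    ∃ e, DualFeasibleBasis A c e ∧ (F : Set (Fin d)) ⊆ Set.range e := by
  rcases (card_le_of_linearIndepOn hF).lt_or_eq with hlt | heq
  · obtain ⟨i, hi, l', hl', htight', hF'⟩ := exists_tight_insert hA hF hlt hl htight
    obtain ⟨e, he, hsub⟩ := exists_dualFeasibleBasis_superset hA hF' hl' htight'
    exact ⟨e, he, (Finset.coe_subset.2 (Finset.subset_insert i F)).trans hsub⟩
  · obtain ⟨e, he, hrange⟩ := exists_dualFeasibleBasis_range_eq hF heq hl htight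
    exact ⟨e, he, hrange.ge⟩
termination_by m - F.card
decreasing_by
  rw [Finset.card_insert_of_notMem hi]
  omega

end BasisCompletion

section OptimalSolutions

variable {A : Matrix (Fin m) (Fin d) ℝ} {c : Fin d → ℝ} {v : Fin m → ℝ} {x : Fin d → ℝ}

theorem exists_dualFeasibleBasis_eq_basicSol (hA : A.rank = m) (hx : x ∈ optSet A v c)
    (hind : LinearIndepOn ℝ Aᵀ (Function.support x)) :
    ∃ e, DualFeasibleBasis A c e ∧ x = basicSol A e v := by
  classical
  obtain ⟨l, hl, htight⟩ := exists_mem_dualFeasSet_tight_of_mem_optSet hx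
  obtain ⟨e, he, hsub⟩ := exists_dualFeasibleBasis_superset hA
    (F := (Function.support x).toFinset) (by rwa [Set.coe_toFinset]) hl
    fun i hi => htight i (by simpa using hi)
  refine ⟨e, he, ?_⟩
  conv_rhs => rw [← hx.1.1]
  refine he.1.eq_basicSol fun i hi => by_contra fun hxi => hi (hsub ?_)
  simpa using hxi

theorem exists_mem_optSet_mem_openSegment_of_not_linearIndepOn
    (hrec : ∀ r, A *ᵥ r = 0 → 0 ≤ r → c ⬝ᵥ r ≤ 0 → r = 0) (hx : x ∈ optSet A v c)
    (hdep : ¬LinearIndepOn ℝ Aᵀ (Function.support x)) :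
    ∃ y ∈ optSet A v c, ∃ z ∈ optSet A v c, Function.support y ⊂ Function.support x ∧
      Function.support z ⊂ Function.support x ∧ x ∈ openSegment ℝ y z := by
  obtain ⟨g, hg, hgsum, hneg⟩ := exists_neg_relation_of_not_linearIndepOn hdep
  have hAg : A *ᵥ g = 0 := by rw [← vecMul_transpose, vecMul_eq_sum]; exact hgsum
  have hAg' : A *ᵥ -g = 0 := by rw [mulVec_neg, hAg, neg_zero]
  have hg0 : ∀ i, x i = 0 → g i = 0 := fun i hi => hg i (by simpa using hi)
  have hcg : c ⬝ᵥ g = 0 := by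
    have h₁ := dotProduct_nonneg_of_mem_optSet hx hAg fun i hi => (hg0 i hi).ge
    have h₂ := dotProduct_nonneg_of_mem_optSet hx hAg' fun i hi => by simp [hg0 i hi]
    rw [dotProduct_neg] at h₂
    linarith
  have hpos : ∃ i, (-g) i < 0 := by
    by_contra! h
    obtain ⟨i, hi⟩ := hneg
    have := congrFun (hrec (-g) hAg' h (by rw [dotProduct_neg, hcg, neg_zero])) i
    simp at this
    linarith
  obtain ⟨τ₁, hτ₁, hnn₁, hss₁⟩ := exists_pos_nonneg_add_smul_support_ssubset hx.1.2 hg0 hneg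
  obtain ⟨τ₂, hτ₂, hnn₂, hss₂⟩ := exists_pos_nonneg_add_smul_support_ssubset hx.1.2
    (fun i hi => by simp [hg0 i hi]) hpos
  refine ⟨_, add_smul_mem_optSet hx hAg hcg hnn₁, _,
    add_smul_mem_optSet hx hAg' (by rw [dotProduct_neg, hcg, neg_zero]) hnn₂, hss₁, hss₂,
    τ₂ / (τ₁ + τ₂), τ₁ / (τ₁ + τ₂), by positivity, by positivity, by field_simp; ring, ?_⟩
  ext i
  simp only [Pi.add_apply, Pi.smul_apply, Pi.neg_apply, smul_eq_mul]
  field_simp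
  ring

theorem optSet_subset_of_convex (hrec : ∀ r, A *ᵥ r = 0 → 0 ≤ r → c ⬝ᵥ r ≤ 0 → r = 0)
    {s : Set (Fin d → ℝ)} (hs : Convex ℝ s)
    (hbasic : ∀ x ∈ optSet A v c, LinearIndepOn ℝ Aᵀ (Function.support x) → x ∈ s) :
    optSet A v c ⊆ s := by
  intro x hx
  induction hn : (Function.support x).ncard using Nat.strong_induction_on generalizing x with
  | _ n ih =>
  by_cases hind : LinearIndepOn ℝ Aᵀ (Function.support x)
  · exact hbasic x hx hind
  obtain ⟨y, hy, z, hz, hyx, hzx, hxyz⟩ :=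
    exists_mem_optSet_mem_openSegment_of_not_linearIndepOn hrec hx hind
  exact hs.openSegment_subset (ih _ (hn ▸ Set.ncard_lt_ncard hyx) hy rfl)
    (ih _ (hn ▸ Set.ncard_lt_ncard hzx) hz rfl) hxyz

end OptimalSolutions

theorem convex_setOf_eq_zero_and_pos {ι : Type*} (Z S : Set ι) :
    Convex ℝ {x : ι → ℝ | (∀ i ∈ Z, x i = 0) ∧ ∀ i ∈ S, 0 < x i} := by
  intro x hx y hy a b ha hb hab
  refine ⟨fun i hi => by simp [hx.1 i hi, hy.1 i hi], fun i hi => ?_⟩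
  simp only [Pi.add_apply, Pi.smul_apply, smul_eq_mul]
  rcases ha.eq_or_lt with rfl | ha
  · rw [zero_add] at hab
    simpa [hab] using hy.2 i hi
  · exact add_pos_of_pos_of_nonneg (mul_pos ha (hx.2 i hi)) (mul_nonneg hb (hy.2 i hi).le)

section Stability

variable {A : Matrix (Fin m) (Fin d) ℝ} {b : Fin m → ℝ} {c xstar : Fin d → ℝ}

theorem eventually_dualFeasibleBasis_basicSol (hunique : optSet A b c = {xstar}) :
    ∀ᶠ v in 𝓝 b, ∀ e, DualFeasibleBasis A c e →
      (0 ≤ basicSol A e v → basicSol A e b = xstar) ∧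
      (basicSol A e b = xstar → ∀ i, 0 < xstar i → 0 < basicSol A e v i) := by
  refine Filter.eventually_all.2 fun e => ?_
  by_cases he : DualFeasibleBasis A c e
  swap
  · exact .of_forall fun _ h => absurd h he
  have hcont : ∀ i, ContinuousAt (fun v => basicSol A e v i) b := fun i =>
    ((continuous_apply i).comp (continuous_basicSol A e)).continuousAt
  by_cases hb : basicSol A e b = xstar
  · have hpos : ∀ᶠ v in 𝓝 b, ∀ i, 0 < xstar i → 0 < basicSol A e v i :=
      Filter.eventually_all.2 fun i => by
        by_cases hi : 0 < xstar i
        · have hbi : 0 < basicSol A e b i := by rwa [hb]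
          exact ((hcont i).eventually (lt_mem_nhds hbi)).mono fun _ h _ => h
        · exact .of_forall fun _ h => absurd h hi
    filter_upwards [hpos] with v hv _
    exact ⟨fun _ => hb, fun _ => hv⟩
  · obtain ⟨i, hi⟩ : ∃ i, basicSol A e b i < 0 := by
      by_contra! h
      exact hb (by simpa [hunique] using he.basicSol_mem_optSet h)
    filter_upwards [(hcont i).eventually (gt_mem_nhds hi)] with v hv _
    exact ⟨fun h => absurd (h i) (not_le.2 hv), fun h => absurd h hb⟩

theorem eventually_forall_mem_optSet (hA : A.rank = m) (hunique : optSet A b c = {xstar}) :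
    ∀ᶠ v in 𝓝 b, ∀ x ∈ optSet A v c,
      (∀ i, (∀ e, DualFeasibleBasis A c e → basicSol A e b = xstar → i ∉ Set.range e) →
        x i = 0) ∧ ∀ i, 0 < xstar i → 0 < x i := by
  filter_upwards [eventually_dualFeasibleBasis_basicSol hunique] with v hv x hx
  refine optSet_subset_of_convex (fun _ => eq_zero_of_optSet_eq_singleton hunique)
    (convex_setOf_eq_zero_and_pos _ _) (fun x hx hind => ?_) hx
  obtain ⟨e, he, rfl⟩ := exists_dualFeasibleBasis_eq_basicSol hA hx hind
  have hb := (hv e he).1 hx.1.2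
  exact ⟨fun i hi => basicSol_apply_of_notMem_range A v (hi e he hb), (hv e he).2 hb⟩

end Stability

section Probability

variable {Ω E : Type*} [MeasurableSpace Ω] {P : Measure Ω}

theorem TendstoInDistribution.tendstoInDistribution [IsProbabilityMeasure P] [TopologicalSpace E]
    [MeasurableSpace E] [OpensMeasurableSpace E] {X : ℕ → Ω → E} {Y : Ω → E}
    (h : _root_.TendstoInDistribution P X Y) (hX : ∀ n, AEMeasurable (X n) P)
    (hY : AEMeasurable Y P) :
    MeasureTheory.TendstoInDistribution X atTop Y (fun _ => P) P where
  forall_aemeasurable := hX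
  aemeasurable_limit := hY
  tendsto := by
    refine ProbabilityMeasure.tendsto_iff_forall_integral_tendsto.2 fun f => ?_
    simp only [ProbabilityMeasure.coe_mk]
    rw [integral_map hY f.continuous.aestronglyMeasurable]
    simpa only [integral_map (hX _) f.continuous.aestronglyMeasurable] using h f

theorem MeasureTheory.TendstoInDistribution.tendstoInMeasure_const [IsProbabilityMeasure P]
    [PseudoMetricSpace E] [MeasurableSpace E] [BorelSpace E] {X : ℕ → Ω → E} {x : E}
    (h : MeasureTheory.TendstoInDistribution X atTop (fun _ => x) (fun _ => P) P) :
    TendstoInMeasure P X atTop fun _ => x := by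
  refine tendstoInMeasure_iff_dist.2 fun ε hε => ?_
  have hF : IsClosed {y : E | ε ≤ dist y x} := isClosed_le continuous_const (by fun_prop)
  have hlim := ProbabilityMeasure.limsup_measure_closed_le_of_tendsto h.tendsto hF
  simp only [ProbabilityMeasure.coe_mk, Measure.map_const, measure_univ, one_smul,
    Measure.map_apply_of_aemeasurable (h.forall_aemeasurable _) hF.measurableSet] at hlim
  rw [Measure.dirac_apply' x hF.measurableSet, Set.indicator_of_notMem (by simpa using hε)] at hlim
  exact tendsto_of_le_liminf_of_limsup_le zero_le hlim

theorem tendstoInMeasure_of_tendstoInDistribution_smul_sub [IsProbabilityMeasure P]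
    [NormedAddCommGroup E] [NormedSpace ℝ E] [MeasurableSpace E] [BorelSpace E]
    [SecondCountableTopology E]
    {X : ℕ → Ω → E} {x : E} {r : ℕ → ℝ} {G : Ω → E} (hX : ∀ n, Measurable (X n))
    (hr_pos : ∀ n, 0 < r n) (hr : Tendsto r atTop atTop) (hG : Measurable G)
    (h : _root_.TendstoInDistribution P (fun n ω => r n • (X n ω - x)) G) :
    TendstoInMeasure P X atTop fun _ => x := by
  have hinv : TendstoInMeasure P (fun n (_ : Ω) => (r n)⁻¹) atTop fun _ => 0 :=
    tendstoInMeasure_of_tendsto_ae (fun _ => aestronglyMeasurable_const)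
      (ae_of_all _ fun _ => hr.inv_tendsto_atTop)
  have hslutsky := (h.tendstoInDistribution
    (fun n => (((hX n).sub_const x).const_smul _).aemeasurable)
    hG.aemeasurable).continuous_comp_prodMk_of_tendstoInMeasure_const
      (g := fun p : E × ℝ => p.2 • p.1) (by fun_prop) hinv fun _ => aemeasurable_const
  simp only [zero_smul, smul_smul, inv_mul_cancel₀ (hr_pos _).ne', one_smul] at hslutsky
  simpa [tendstoInMeasure_iff_dist, dist_eq_norm] using hslutsky.tendstoInMeasure_const

theorem MeasureTheory.TendstoInMeasure.tendsto_measure_notMem [PseudoMetricSpace E]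
    {X : ℕ → Ω → E} {x : E} (h : TendstoInMeasure P X atTop fun _ => x) {U : Set E}
    (hU : U ∈ 𝓝 x) :
    Tendsto (fun n => P {ω | X n ω ∉ U}) atTop (𝓝 0) := by
  obtain ⟨ε, hε, hball⟩ := Metric.mem_nhds_iff.1 hU
  refine tendsto_of_tendsto_of_tendsto_of_le_of_le tendsto_const_nhds
    (tendstoInMeasure_iff_dist.1 h ε hε) (fun _ => zero_le) fun n => measure_mono fun ω hω =>
      le_of_not_gt fun hlt => hω (hball (Metric.mem_ball.2 hlt))

theorem tendsto_measure_of_subset_union [IsProbabilityMeasure P] {B F T : ℕ → Set Ω}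
    (hB : Tendsto (fun n => P (B n)) atTop (𝓝 0)) (hF : Tendsto (fun n => P (F n)) atTop (𝓝 1))
    (hT : ∀ n, F n ⊆ T n ∪ B n) : Tendsto (fun n => P (T n)) atTop (𝓝 1) := by
  refine tendsto_of_tendsto_of_tendsto_of_le_of_le
    (by simpa using ENNReal.Tendsto.sub hF hB (.inl ENNReal.one_ne_top)) tendsto_const_nhds
    (fun n => tsub_le_iff_right.2 ((measure_mono (hT n)).trans (measure_union_le _ _)))
    fun _ => prob_le_one

end Probability

theorem stmt9_general {Ω : Type*} [MeasurableSpace Ω] (P : Measure Ω) [IsProbabilityMeasure P]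
    (A : Matrix (Fin m) (Fin d) ℝ) (hA : A.rank = m)
    (b : Fin m → ℝ) (c : Fin d → ℝ)
    (xstar : Fin d → ℝ) (hunique : optSet A b c = {xstar})
    (bn : ℕ → Ω → Fin m → ℝ) (hbn : ∀ n, Measurable (bn n))
    (rn : ℕ → ℝ) (hrnpos : ∀ n, 0 < rn n) (hrn : Tendsto rn atTop atTop)
    (G : Ω → Fin m → ℝ) (hG : Measurable G)
    (hclt : TendstoInDistribution P (fun n ω => rn n • (bn n ω - b)) G)
    (hfeas : Tendsto (fun n => P {ω | (optSet A (bn n ω) c).Nonempty}) atTop (𝓝 1))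
    (xn : ℕ → Ω → Fin d → ℝ)
    (hxnopt : ∀ n ω, (optSet A (bn n ω) c).Nonempty → xn n ω ∈ optSet A (bn n ω) c) :
    Tendsto (fun n => P {ω | ∀ i : Fin d,
        (∀ e : Fin m → Fin d, DualFeasibleBasis A c e → basicSol A e b = xstar →
          i ∉ Set.range e) → xn n ω i = 0}) atTop (𝓝 1) ∧
    Tendsto (fun n => P {ω | ∀ i : Fin d, 0 < xstar i → 0 < xn n ω i})
      atTop (𝓝 1) := by
  have hstable := eventually_forall_mem_optSet hA hunique
  have hbad := (tendstoInMeasure_of_tendstoInDistribution_smul_sub hbn hrnpos hrn hG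
    hclt).tendsto_measure_notMem hstable
  constructor
  · exact tendsto_measure_of_subset_union hbad hfeas fun n ω hω =>
      (em (bn n ω ∈ _)).imp (fun h => (h _ (hxnopt n ω hω)).1) id
  · exact tendsto_measure_of_subset_union hbad hfeas fun n ω hω =>
      (em (bn n ω ∈ _)).imp (fun h => (h _ (hxnopt n ω hω)).2) id

/-- Theorem 3.5 (first part): assume (A2) uniqueness of the optimal solution
`x = x*(b)`, (B1) and (B2). With `Pos(x) = {i : x_i > 0}` and `TZ(x)` the set of
coordinates belonging to no dual feasible basis inducing `x`, any measurable
choice `x*(b_n)` of an optimal solution satisfies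
`ℙ(x*(b_n)_i = 0 ∀ i ∈ TZ(x)) → 1` and `ℙ(x*(b_n)_i > 0 ∀ i ∈ Pos(x)) → 1`. -/
theorem stmt9 {Ω : Type*} [MeasurableSpace Ω] (P : Measure Ω) [IsProbabilityMeasure P]
    (hm : 1 ≤ m) (hmd : m ≤ d)
    (A : Matrix (Fin m) (Fin d) ℝ) (hA : A.rank = m)
    (b : Fin m → ℝ) (c : Fin d → ℝ)
    (xstar : Fin d → ℝ) (hunique : optSet A b c = {xstar})
    (bn : ℕ → Ω → Fin m → ℝ) (hbn : ∀ n, Measurable (bn n))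
    (rn : ℕ → ℝ) (hrnpos : ∀ n, 0 < rn n) (hrn : Tendsto rn atTop atTop)
    (G : Ω → Fin m → ℝ) (hG : Measurable G)
    (hclt : TendstoInDistribution P (fun n ω => rn n • (bn n ω - b)) G)
    (habs : Measure.map G P ≪ (volume : Measure (Fin m → ℝ)))
    (hfeas : Tendsto (fun n => P {ω | (optSet A (bn n ω) c).Nonempty}) atTop (𝓝 1))
    (xn : ℕ → Ω → Fin d → ℝ) (hxn : ∀ n, Measurable (xn n))
    (hxnopt : ∀ n ω, (optSet A (bn n ω) c).Nonempty → xn n ω ∈ optSet A (bn n ω) c) :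
    Tendsto (fun n => P {ω | ∀ i : Fin d,
        (∀ e : Fin m → Fin d, DualFeasibleBasis A c e → basicSol A e b = xstar →
          i ∉ Set.range e) → xn n ω i = 0}) atTop (𝓝 1) ∧
    Tendsto (fun n => P {ω | ∀ i : Fin d, 0 < xstar i → 0 < xn n ω i})
      atTop (𝓝 1) :=
  stmt9_general P A hA b c xstar hunique bn hbn rn hrnpos hrn G hG hclt hfeas xn hxnopt

end
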